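/- Let A be a Dedekind domain with fraction field F, and let G ∈ A[[X]] be a formal power series that is rational, i.e., G = p/q for some polynomials p, q ∈ A[X] with q ≠ 0. Then there exist polynomials P, Q ∈ A[X] with P and Q relatively prime in F[X] and Q(0) = 1, such that G = P/Q. -/

import Mathlib

/-!
Over `F`, cancelling `gcd p q` gives a coprime pair `P, Q` with `Q * G = P`; then `Q(0) ≠ 0`,
since otherwise `X` would divide both, so `Q` can be normalised to `Q(0) = 1`. A Bézout relation
`u * P + v * Q = 1` shows that `1 / Q = u * G + v` has bounded denominators. Hence, at every
height-one prime, the valuations of the coefficients of `Q` and of `1 / Q` attain a maximum, and the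
Gauss-lemma argument (the product of the first maximal coefficients survives in `Q * (1 / Q) = 1`)
puts the maximum for `Q` at its constant coefficient `1`. So the coefficients of `Q` are integral
at every prime, hence lie in `A`, and then so do those of `P = Q * G`.
-/

open Polynomial
open scoped WithZero PowerSeries

theorem Polynomial.coeff_zero_ne_zero_of_isCoprime {K : Type*} [Field K] {G : K⟦X⟧} {P Q : K[X]}
    (hPQ : IsCoprime P Q) (hQG : (Q : K⟦X⟧) * G = P) : Q.coeff 0 ≠ 0 := by
  intro hQ0
  have hP0 : P.coeff 0 = 0 := by
    rw [← constantCoeff_coe, ← hQG, map_mul, constantCoeff_coe, hQ0, zero_mul]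
  exact not_isUnit_X (hPQ.isUnit_of_dvd' (X_dvd_iff.2 hP0) (X_dvd_iff.2 hQ0))

theorem PowerSeries.exists_reduced_fraction {K : Type*} [Field K] {G : K⟦X⟧} {p q : K[X]}
    (hq : q ≠ 0) (hqG : (q : K⟦X⟧) * G = p) :
    ∃ P Q : K[X], IsCoprime P Q ∧ Q.coeff 0 = 1 ∧ (Q : K⟦X⟧) * G = P := by
  classical
  obtain ⟨P₀, Q₀, hp, hq', hunit⟩ := extract_gcd p q
  have hcop : IsCoprime P₀ Q₀ := (gcd_isUnit_iff _ _).1 hunit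
  have hgcd : ((gcd p q : K[X]) : K⟦X⟧) ≠ 0 := by
    exact_mod_cast gcd_ne_zero_of_right hq
  have hQG : (Q₀ : K⟦X⟧) * G = P₀ :=
    mul_left_cancel₀ hgcd <| by
      rw [← mul_assoc, ← Polynomial.coe_mul, ← hq', hqG, ← Polynomial.coe_mul, ← hp]
  have hQ0 := coeff_zero_ne_zero_of_isCoprime hcop hQG
  set c := Polynomial.C (Q₀.coeff 0)⁻¹
  have hc : IsUnit c := isUnit_C.2 (inv_ne_zero hQ0).isUnit
  refine ⟨c * P₀, c * Q₀, (isCoprime_mul_unit_left hc _ _).2 hcop,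
    by rw [Polynomial.coeff_C_mul, inv_mul_cancel₀ hQ0], ?_⟩
  rw [Polynomial.coe_mul, Polynomial.coe_mul, mul_assoc, hQG]

theorem IsLocalization.exists_integer_multiple_polynomial_mul_add {R S : Type*} [CommRing R]
    (M : Submonoid R) [CommRing S] [Algebra R S] [IsLocalization M S] (u v : S[X]) (G : R⟦X⟧) :
    ∃ d ∈ M, ∃ H : R⟦X⟧, PowerSeries.map (algebraMap R S) H =
      algebraMap R S d • ((u : S⟦X⟧) * PowerSeries.map (algebraMap R S) G + v) := by
  obtain ⟨a, ha, hu⟩ := integerNormalization_spec M u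
  obtain ⟨b, hb, hv⟩ := integerNormalization_spec M v
  have hcoe {c : R} {w : S[X]} {w' : R[X]} (h : w'.map (algebraMap R S) = c • w) :
      PowerSeries.map (algebraMap R S) w' = PowerSeries.C (algebraMap R S c) * w := by
    rw [← polynomial_map_coe, h, ← algebraMap_smul S, Polynomial.smul_eq_C_mul,
      Polynomial.coe_mul, Polynomial.coe_C]
  refine ⟨a * b, M.mul_mem ha hb, PowerSeries.C b * integerNormalization M u * G +
    PowerSeries.C a * integerNormalization M v, ?_⟩
  simp only [map_add, map_mul, hcoe hu, hcoe hv, PowerSeries.map_C, PowerSeries.smul_eq_C_mul]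
  ring

theorem Nat.exists_first_argmax {α : Type*} [LinearOrder α] {f : ℕ → α}
    (h : ∃ i, ∀ k, f k ≤ f i) : ∃ i, (∀ k, f k ≤ f i) ∧ ∀ k < i, f k < f i := by
  classical
  refine ⟨Nat.find h, Nat.find_spec h, fun k hk => ?_⟩
  refine (Nat.find_spec h k).lt_of_ne fun hki => Nat.find_min h hk fun m => ?_
  exact hki ▸ Nat.find_spec h m

namespace PowerSeries

variable {R Γ₀ : Type*} [CommRing R] [LinearOrderedCommGroupWithZero Γ₀] (v : Valuation R Γ₀)

theorem valuation_coeff_add_mul {f g : R⟦X⟧} {i j : ℕ}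
    (hfi : ∀ k, v (coeff k f) ≤ v (coeff i f)) (hfi' : ∀ k < i, v (coeff k f) < v (coeff i f))
    (hgj : ∀ k, v (coeff k g) ≤ v (coeff j g)) (hgj' : ∀ k < j, v (coeff k g) < v (coeff j g))
    (hfi0 : v (coeff i f) ≠ 0) (hgj0 : v (coeff j g) ≠ 0) :
    v (coeff (i + j) (f * g)) = v (coeff i f) * v (coeff j g) := by
  classical
  rw [coeff_mul, ← map_mul]
  refine v.map_sum_eq_of_lt (j := (i, j)) (by simp) fun ⟨a, b⟩ hab => ?_
  simp only [Finset.mem_sdiff, Finset.HasAntidiagonal.mem_antidiagonal, Finset.mem_singleton,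
    Prod.mk.injEq] at hab
  rw [map_mul, map_mul]
  rcases lt_or_gt_of_ne (fun h : a = i => hab.2 ⟨h, by omega⟩) with ha | ha
  · exact mul_lt_mul_of_lt_of_le_of_nonneg_of_pos (hfi' a ha) (hgj b) zero_le (zero_lt_iff.2 hgj0)
  · exact mul_lt_mul_of_le_of_lt_of_nonneg_of_pos (hfi a) (hgj' b (by omega)) zero_le
      (zero_lt_iff.2 hfi0)

theorem valuation_coeff_le_of_mul_eq_one {f g : R⟦X⟧} (hfg : f * g = 1)
    (hf : ∃ i, ∀ k, v (coeff k f) ≤ v (coeff i f)) (hg : ∃ j, ∀ k, v (coeff k g) ≤ v (coeff j g))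
    (k : ℕ) : v (coeff k f) ≤ v (coeff 0 f) := by
  obtain ⟨i, hfi, hfi'⟩ := Nat.exists_first_argmax hf
  obtain ⟨j, hgj, hgj'⟩ := Nat.exists_first_argmax hg
  have h00 : v (coeff 0 f) * v (coeff 0 g) = 1 := by
    rw [← map_mul, coeff_zero_eq_constantCoeff_apply, coeff_zero_eq_constantCoeff_apply,
      ← map_mul, hfg, map_one, map_one]
  have hfi0 : v (coeff i f) ≠ 0 :=
    ((zero_lt_iff.2 (left_ne_zero_of_mul_eq_one h00)).trans_le (hfi 0)).ne'
  have hgj0 : v (coeff j g) ≠ 0 :=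
    ((zero_lt_iff.2 (right_ne_zero_of_mul_eq_one h00)).trans_le (hgj 0)).ne'
  have hij : v (coeff (i + j) (f * g)) ≠ 0 := by
    rw [valuation_coeff_add_mul v hfi hfi' hgj hgj' hfi0 hgj0]
    exact mul_ne_zero hfi0 hgj0
  obtain rfl : i = 0 := by
    by_contra hi
    rw [hfg, coeff_one, if_neg (by omega), map_zero] at hij
    exact hij rfl
  exact hfi k

end PowerSeries

theorem WithZero.exists_forall_le_of_bddAbove {ι : Type*} {f : ι → ℤᵐ⁰}
    (hbdd : BddAbove (Set.range f)) (hf : ∃ i, f i ≠ 0) : ∃ i, ∀ j, f j ≤ f i := by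
  obtain ⟨C, hC⟩ := hbdd
  obtain ⟨i₀, hi₀⟩ := hf
  have hC0 : C ≠ 0 := ne_zero_of_lt ((zero_lt_iff.2 hi₀).trans_le (hC ⟨i₀, rfl⟩))
  obtain ⟨m, ⟨i, hi⟩, hm⟩ := Int.exists_greatest_of_bdd (P := fun m => ∃ i, f i = exp m)
    ⟨log C, fun m ⟨i, hi⟩ => by rw [← exp_le_exp, exp_log hC0, ← hi]; exact hC ⟨i, rfl⟩⟩
    ⟨log (f i₀), i₀, (exp_log hi₀).symm⟩
  refine ⟨i, fun j => ?_⟩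
  rcases eq_or_ne (f j) 0 with hj | hj
  · exact hj ▸ zero_le
  · rw [hi, ← exp_log hj, exp_le_exp]
    exact hm _ ⟨j, (exp_log hj).symm⟩

theorem Polynomial.exists_forall_valuation_coeff_le {R Γ₀ : Type*} [CommRing R]
    [LinearOrderedCommGroupWithZero Γ₀] (v : Valuation R Γ₀) (p : R[X]) :
    ∃ i, ∀ k, v (p.coeff k) ≤ v (p.coeff i) := by
  obtain ⟨i, -, hi⟩ := (Finset.range (p.natDegree + 1)).exists_max_image (fun k => v (p.coeff k))
    ⟨0, by simp⟩
  refine ⟨i, fun k => ?_⟩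
  rcases le_or_gt k p.natDegree with hk | hk
  · exact hi k (Finset.mem_range.2 (Nat.lt_succ_of_le hk))
  · rw [coeff_eq_zero_of_natDegree_lt hk, map_zero]
    exact zero_le

theorem Polynomial.mem_lifts_of_mul_eq_one {A F : Type*} [CommRing A] [IsDedekindDomain A]
    [Field F] [Algebra A F] [IsFractionRing A F] {Q : F[X]} (hQ0 : Q.coeff 0 = 1) {R : F⟦X⟧}
    (hQR : (Q : F⟦X⟧) * R = 1) {d : A} (hd : d ≠ 0) {H : A⟦X⟧}
    (hH : PowerSeries.map (algebraMap A F) H = algebraMap A F d • R) :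
    Q ∈ lifts (algebraMap A F) := by
  refine (lifts_iff_coeff_lifts Q).2 fun n =>
    IsDedekindDomain.HeightOneSpectrum.mem_integers_of_valuation_le_one F _ fun w => ?_
  set v := w.valuation F
  have hd' : 0 < v (algebraMap A F d) := zero_lt_iff.2 <|
    (Valuation.ne_zero_iff v).2 ((map_ne_zero_iff _ (IsFractionRing.injective A F)).2 hd)
  have hR : BddAbove (Set.range fun k => v (PowerSeries.coeff k R)) := by
    refine ⟨(v (algebraMap A F d))⁻¹, ?_⟩
    rintro _ ⟨k, rfl⟩
    rw [← mul_one (v (algebraMap A F d))⁻¹, le_inv_mul_iff₀ hd', ← map_mul, ← smul_eq_mul,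
      ← PowerSeries.coeff_smul, ← hH, PowerSeries.coeff_map]
    exact w.valuation_le_one _
  have hR0 : v (PowerSeries.coeff 0 R) ≠ 0 := by
    have h := congrArg PowerSeries.constantCoeff hQR
    rw [map_mul, constantCoeff_coe, hQ0, one_mul, map_one,
      ← PowerSeries.coeff_zero_eq_constantCoeff_apply] at h
    simp [h]
  simpa [hQ0] using PowerSeries.valuation_coeff_le_of_mul_eq_one v hQR
    (by simpa only [coeff_coe] using Q.exists_forall_valuation_coeff_le v)
    (WithZero.exists_forall_le_of_bddAbove hR ⟨0, hR0⟩) n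

theorem Polynomial.mem_lifts_of_coe_eq_map {R S : Type*} [CommSemiring R] [CommSemiring S]
    (f : R →+* S) {p : S[X]} {G : R⟦X⟧} (h : (p : S⟦X⟧) = PowerSeries.map f G) : p ∈ lifts f :=
  (lifts_iff_coeff_lifts p).2 fun n => ⟨PowerSeries.coeff n G, by
    rw [← PowerSeries.coeff_map, ← h, coeff_coe]⟩

theorem generalized_fatou
    (A : Type*) [CommRing A] [IsDedekindDomain A]
    (F : Type*) [Field F] [Algebra A F] [IsFractionRing A F]
    (G : PowerSeries A)
    (hrat : ∃ p q : Polynomial A, q ≠ 0 ∧ (q : PowerSeries A) * G = (p : PowerSeries A)) :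
    ∃ P Q : Polynomial A,
      IsCoprime (P.map (algebraMap A F)) (Q.map (algebraMap A F)) ∧
      Q.coeff 0 = 1 ∧
      (Q : PowerSeries A) * G = (P : PowerSeries A) := by
  obtain ⟨p, q, hq, hqG⟩ := hrat
  have hφ : Function.Injective (algebraMap A F) := IsFractionRing.injective A F
  obtain ⟨P, Q, hPQ, hQ0, hQG⟩ := PowerSeries.exists_reduced_fraction
    (G := PowerSeries.map (algebraMap A F) G) (p := p.map (algebraMap A F))
    ((Polynomial.map_ne_zero_iff hφ).2 hq)
    (by rw [polynomial_map_coe, polynomial_map_coe, ← map_mul, hqG])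
  have ⟨u, v, huv⟩ := hPQ
  have hQR : (Q : F⟦X⟧) * (u * PowerSeries.map (algebraMap A F) G + v) = 1 := by
    calc (Q : F⟦X⟧) * (u * PowerSeries.map (algebraMap A F) G + v)
        = ((u * P + v * Q : F[X]) : F⟦X⟧) := by push_cast; rw [← hQG]; ring
      _ = 1 := by rw [huv, Polynomial.coe_one]
  obtain ⟨d, hd, H, hH⟩ :=
    IsLocalization.exists_integer_multiple_polynomial_mul_add (nonZeroDivisors A) u v G
  obtain ⟨QA, rfl⟩ :=
    (mem_lifts Q).1 (Q.mem_lifts_of_mul_eq_one hQ0 hQR (nonZeroDivisors.ne_zero hd) hH)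
  obtain ⟨PA, rfl⟩ := (mem_lifts P).1 (P.mem_lifts_of_coe_eq_map (algebraMap A F) (G := QA * G)
    (by rw [← hQG, map_mul, polynomial_map_coe]))
  refine ⟨PA, QA, hPQ, hφ ?_, PowerSeries.map_injective _ hφ ?_⟩
  · rwa [map_one, ← coeff_map]
  · rw [map_mul, ← polynomial_map_coe, ← polynomial_map_coe, hQG]
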